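/- arXiv:math/0610206 — 2 statements merged into one kernel-verified Lean document; each statement's English description precedes it below -/
import Mathlib

section
/- The map φ(x,y,z) = (x/(1+z), y/(1+z), z/(1+z)) restricts to a bijection from Ω∞ onto Ω∖{(0,0,1)}, whose inverse is given by (ξ,η,ζ) ↦ (ξ/(1−ζ), η/(1−ζ), ζ/(1−ζ)); moreover φ maps the interior Ω∞° bijectively onto the interior Ω° of Ω. -/
noncomputable section

/-- The finite reference pyramid `Ω`. -/
def Pyr : Set (ℝ × ℝ × ℝ) :=
  {p | 0 ≤ p.1 ∧ 0 ≤ p.2.1 ∧ 0 ≤ p.2.2 ∧ p.1 ≤ 1 - p.2.2 ∧ p.2.1 ≤ 1 - p.2.2}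

/-- The interior `Ω°` of the finite pyramid. -/
def PyrInt : Set (ℝ × ℝ × ℝ) :=
  {p | 0 < p.1 ∧ 0 < p.2.1 ∧ 0 < p.2.2 ∧ p.1 < 1 - p.2.2 ∧ p.2.1 < 1 - p.2.2}

/-- The (finite part of the) infinite reference pyramid `Ω∞`. -/
def PyrInf : Set (ℝ × ℝ × ℝ) :=
  {p | 0 ≤ p.1 ∧ p.1 ≤ 1 ∧ 0 ≤ p.2.1 ∧ p.2.1 ≤ 1 ∧ 0 ≤ p.2.2}

/-- The interior `Ω∞° = (0,1) × (0,1) × (0,∞)`. -/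
def PyrInfInt : Set (ℝ × ℝ × ℝ) :=
  {p | 0 < p.1 ∧ p.1 < 1 ∧ 0 < p.2.1 ∧ p.2.1 < 1 ∧ 0 < p.2.2}

/-- The projective map `φ(x,y,z) = (x/(1+z), y/(1+z), z/(1+z))`. -/
def phi : ℝ × ℝ × ℝ → ℝ × ℝ × ℝ :=
  fun p => (p.1 / (1 + p.2.2), p.2.1 / (1 + p.2.2), p.2.2 / (1 + p.2.2))

/-- The candidate inverse `(ξ,η,ζ) ↦ (ξ/(1−ζ), η/(1−ζ), ζ/(1−ζ))`. -/
def psi : ℝ × ℝ × ℝ → ℝ × ℝ × ℝ :=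
  fun q => (q.1 / (1 - q.2.2), q.2.1 / (1 - q.2.2), q.2.2 / (1 - q.2.2))

open Set

/- `φ` and `ψ` are mutually inverse wherever their denominators `1 + z` and `1 - ζ` do not
vanish. For `1 + z > 0`, clearing the denominator turns each defining inequality of `Ω` into the
corresponding one of `Ω∞` (`ξ ≤ 1 - ζ` becomes `x ≤ 1`, as `1 - z / (1 + z) = 1 / (1 + z)`), and
the same holds for the strict inequalities of the interiors; the apex is never hit because
`z / (1 + z) ≠ 1`. So `φ` maps `Ω∞` into `Ω ∖ {apex}`, and `ψ` maps back since `φ (ψ q) = q`. -/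

theorem psi_phi {p : ℝ × ℝ × ℝ} (h : 1 + p.2.2 ≠ 0) : psi (phi p) = p := by
  obtain ⟨x, y, z⟩ := p
  have hden : 1 - z / (1 + z) = (1 + z)⁻¹ := by field_simp; ring
  simp only [phi, psi, hden, div_inv_eq_mul, div_mul_cancel₀ _ h]

theorem phi_psi {q : ℝ × ℝ × ℝ} (h : 1 - q.2.2 ≠ 0) : phi (psi q) = q := by
  obtain ⟨x, y, z⟩ := q
  have hden : 1 + z / (1 - z) = (1 - z)⁻¹ := by field_simp; ring
  simp only [phi, psi, hden, div_inv_eq_mul, div_mul_cancel₀ _ h]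

theorem phi_ne_apex (p : ℝ × ℝ × ℝ) : phi p ≠ (0, 0, 1) := by
  intro h
  have hz : p.2.2 / (1 + p.2.2) = 1 := congrArg (·.2.2) h
  rcases eq_or_ne (1 + p.2.2) 0 with h0 | h0
  · simp [h0] at hz
  · rw [div_eq_one_iff_eq h0] at hz
    linarith

theorem phi_mem_pyr_iff {p : ℝ × ℝ × ℝ} (hz : -1 < p.2.2) : phi p ∈ Pyr ↔ p ∈ PyrInf := by
  obtain ⟨x, y, z⟩ := p
  have hd : 0 < 1 + z := by linarith
  have hden : 1 - z / (1 + z) = 1 / (1 + z) := by field_simp; ring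
  simp only [phi, Pyr, PyrInf, mem_ofPred_eq, hden, div_le_div_iff_of_pos_right hd,
    le_div_iff₀ hd, zero_mul]
  tauto

theorem phi_mem_pyrInt_iff {p : ℝ × ℝ × ℝ} (hz : -1 < p.2.2) :
    phi p ∈ PyrInt ↔ p ∈ PyrInfInt := by
  obtain ⟨x, y, z⟩ := p
  have hd : 0 < 1 + z := by linarith
  have hden : 1 - z / (1 + z) = 1 / (1 + z) := by field_simp; ring
  simp only [phi, PyrInt, PyrInfInt, mem_ofPred_eq, hden, div_lt_div_iff_of_pos_right hd,
    lt_div_iff₀ hd, zero_mul]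
  tauto

theorem lt_one_of_mem_pyr_diff_apex {q : ℝ × ℝ × ℝ} (hq : q ∈ Pyr \ {(0, 0, 1)}) :
    q.2.2 < 1 := by
  obtain ⟨⟨hx, hy, -, hxz, hyz⟩, hne⟩ := hq
  refine lt_of_le_of_ne (by linarith) fun h => hne ?_
  have hx0 : q.1 = 0 := by linarith
  have hy0 : q.2.1 = 0 := by linarith
  exact Prod.ext hx0 (Prod.ext hy0 h)

theorem pyrInfInt_subset_pyrInf : PyrInfInt ⊆ PyrInf :=
  fun _ ⟨hx, hx1, hy, hy1, hz⟩ => ⟨hx.le, hx1.le, hy.le, hy1.le, hz.le⟩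

theorem pyrInt_subset_pyr_diff_apex : PyrInt ⊆ Pyr \ {(0, 0, 1)} := by
  rintro q ⟨hx, hy, hz, hxz, hyz⟩
  refine ⟨⟨hx.le, hy.le, hz.le, hxz.le, hyz.le⟩, fun h => ?_⟩
  rw [mem_singleton_iff] at h
  simp [h] at hx

theorem invOn_psi_phi : InvOn psi phi PyrInf (Pyr \ {(0, 0, 1)}) :=
  ⟨fun _ hp => psi_phi (by linarith [hp.2.2.2.2]),
    fun _ hq => phi_psi (by linarith [lt_one_of_mem_pyr_diff_apex hq])⟩

theorem mapsTo_phi_pyrInf : MapsTo phi PyrInf (Pyr \ {(0, 0, 1)}) :=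
  fun _ hp => ⟨(phi_mem_pyr_iff (by linarith [hp.2.2.2.2])).2 hp, phi_ne_apex _⟩

theorem neg_one_lt_psi_of_mem_pyr_diff_apex {q : ℝ × ℝ × ℝ} (hq : q ∈ Pyr \ {(0, 0, 1)}) :
    -1 < (psi q).2.2 := by
  have hpos : 0 < 1 - q.2.2 := by linarith [lt_one_of_mem_pyr_diff_apex hq]
  show -1 < q.2.2 / (1 - q.2.2)
  linarith [div_nonneg hq.1.2.2.1 hpos.le]

theorem mapsTo_psi_pyr_diff_apex : MapsTo psi (Pyr \ {(0, 0, 1)}) PyrInf := fun q hq => by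
  rw [← phi_mem_pyr_iff (neg_one_lt_psi_of_mem_pyr_diff_apex hq), invOn_psi_phi.2 hq]
  exact hq.1

theorem mapsTo_phi_pyrInfInt : MapsTo phi PyrInfInt PyrInt :=
  fun _ hp => (phi_mem_pyrInt_iff (by linarith [hp.2.2.2.2])).2 hp

theorem mapsTo_psi_pyrInt : MapsTo psi PyrInt PyrInfInt := fun q hq => by
  have hq' := pyrInt_subset_pyr_diff_apex hq
  rw [← phi_mem_pyrInt_iff (neg_one_lt_psi_of_mem_pyr_diff_apex hq'), invOn_psi_phi.2 hq']
  exact hq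

/-- `φ` restricts to a bijection from `Ω∞` onto `Ω ∖ {(0,0,1)}` with inverse
`ψ`, and it maps the interior `Ω∞°` bijectively onto the interior `Ω°`. -/
theorem phi_bijOn :
    Set.BijOn phi PyrInf (Pyr \ {((0 : ℝ), (0 : ℝ), (1 : ℝ))}) ∧
    (∀ p ∈ PyrInf, psi (phi p) = p) ∧
    (∀ q ∈ Pyr \ {((0 : ℝ), (0 : ℝ), (1 : ℝ))}, psi q ∈ PyrInf ∧ phi (psi q) = q) ∧
    Set.BijOn phi PyrInfInt PyrInt :=
  ⟨invOn_psi_phi.bijOn mapsTo_phi_pyrInf mapsTo_psi_pyr_diff_apex, invOn_psi_phi.1,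
    fun _ hq => ⟨mapsTo_psi_pyr_diff_apex hq, invOn_psi_phi.2 hq⟩,
    (invOn_psi_phi.mono pyrInfInt_subset_pyrInf pyrInt_subset_pyr_diff_apex).bijOn
      mapsTo_phi_pyrInfInt mapsTo_psi_pyrInt⟩

end
end

section
/- Let k ≥ 1 and let r ∈ ℝ[x,y] be a polynomial in two variables. Define f on Ω∖{(0,0,1)} by f(ξ,η,ζ) = ζ^k · r(ξ/(1−ζ), η/(1−ζ)) (well defined since ζ < 1 there). If there exists L ∈ ℝ such that f(ξ,η,ζ) tends to L as (ξ,η,ζ) tends to (0,0,1) within Ω∖{(0,0,1)}, then r is a constant polynomial. (Thus the inverse pullback of r(x,y)·z^k/(1+z)^k to the finite pyramid has a well-defined limit at the apex only when r is constant.) -/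
noncomputable section

/-- Auxiliary: evaluating a polynomial obtained by `MvPolynomial.aeval` into `ℝ[X]`. -/
lemma aux_eval_aeval (g : Fin 2 → Polynomial ℝ) (t : ℝ) (r : MvPolynomial (Fin 2) ℝ) :
    Polynomial.eval t (MvPolynomial.aeval g r)
      = MvPolynomial.eval (fun i => Polynomial.eval t (g i)) r := by
  have := MvPolynomial.map_aeval (R := ℝ) g (Polynomial.evalRingHom t) r
  simp only [Polynomial.coe_evalRingHom] at this
  rw [this]
  have h2 : (Polynomial.evalRingHom t).comp (algebraMap ℝ (Polynomial ℝ)) = RingHom.id ℝ := by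
    ext x; simp
  rw [h2]
  rfl

/-- for `k ≥ 1` and a two-variable real polynomial `r`, if the function
`f(ξ,η,ζ) = ζ^k · r(ξ/(1−ζ), η/(1−ζ))` on `Ω ∖ {(0,0,1)}` has a limit at the apex
`(0,0,1)` within `Ω ∖ {(0,0,1)}`, then `r` is a constant polynomial. -/
theorem limit_at_apex_forces_constant (k : ℕ) (hk : 1 ≤ k)
    (r : MvPolynomial (Fin 2) ℝ)
    (h : ∃ L : ℝ, Filter.Tendsto
      (fun q : ℝ × ℝ × ℝ =>
        q.2.2 ^ k * MvPolynomial.eval ![q.1 / (1 - q.2.2), q.2.1 / (1 - q.2.2)] r)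
      (nhdsWithin ((0 : ℝ), (0 : ℝ), (1 : ℝ)) (Pyr \ {((0 : ℝ), (0 : ℝ), (1 : ℝ))}))
      (nhds L)) :
    ∃ c : ℝ, r = MvPolynomial.C c := by
  obtain ⟨L, hL⟩ := h
  -- Step 1: for a,b ∈ [0,1], eval ![a,b] r = L, via the ray γ t = (a(1-t), b(1-t), t)
  have key : ∀ a ∈ Set.Icc (0:ℝ) 1, ∀ b ∈ Set.Icc (0:ℝ) 1,
      MvPolynomial.eval ![a, b] r = L := by
    intro a ha b hb
    set γ : ℝ → ℝ × ℝ × ℝ := fun t => (a * (1 - t), b * (1 - t), t) with hγ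
    have hmem : ∀ t ∈ Set.Ico (0:ℝ) 1, γ t ∈ Pyr \ {((0:ℝ), (0:ℝ), (1:ℝ))} := by
      intro t ht
      obtain ⟨ht0, ht1⟩ := ht
      constructor
      · refine ⟨?_, ?_, ?_, ?_, ?_⟩ <;> simp only [γ]
        · exact mul_nonneg ha.1 (by linarith)
        · exact mul_nonneg hb.1 (by linarith)
        · exact ht0
        · show a * (1 - t) ≤ 1 - t; nlinarith [ha.2]
        · show b * (1 - t) ≤ 1 - t; nlinarith [hb.2]
      · simp only [Set.mem_singleton_iff, γ, Prod.mk.injEq]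
        rintro ⟨-, -, h3⟩; linarith
    have hγtend : Filter.Tendsto γ (nhdsWithin 1 (Set.Ico (0:ℝ) 1))
        (nhdsWithin ((0:ℝ), (0:ℝ), (1:ℝ)) (Pyr \ {((0:ℝ), (0:ℝ), (1:ℝ))})) := by
      apply tendsto_nhdsWithin_of_tendsto_nhds_of_eventually_within
      · have hc : Continuous γ := by
          apply Continuous.prodMk
          · fun_prop
          · exact Continuous.prodMk (by fun_prop) continuous_id
        have : Filter.Tendsto γ (nhds 1) (nhds (γ 1)) := hc.tendsto 1
        simpa [γ] using this.mono_left nhdsWithin_le_nhds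
      · filter_upwards [self_mem_nhdsWithin] with t ht using hmem t ht
    have h1 : Filter.Tendsto (fun t => (γ t).2.2 ^ k *
        MvPolynomial.eval ![(γ t).1 / (1 - (γ t).2.2), (γ t).2.1 / (1 - (γ t).2.2)] r)
        (nhdsWithin 1 (Set.Ico (0:ℝ) 1)) (nhds L) := hL.comp hγtend
    have h2 : Filter.Tendsto (fun t : ℝ => t ^ k * MvPolynomial.eval ![a, b] r)
        (nhdsWithin 1 (Set.Ico (0:ℝ) 1)) (nhds (MvPolynomial.eval ![a, b] r)) := by
      have hc : Continuous (fun t : ℝ => t ^ k * MvPolynomial.eval ![a, b] r) :=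
        (continuous_pow k).mul continuous_const
      have : Filter.Tendsto (fun t : ℝ => t ^ k * MvPolynomial.eval ![a, b] r)
          (nhds 1) (nhds ((1:ℝ) ^ k * MvPolynomial.eval ![a, b] r)) := hc.tendsto 1
      simpa using this.mono_left nhdsWithin_le_nhds
    have heq : ∀ᶠ t in nhdsWithin 1 (Set.Ico (0:ℝ) 1),
        (γ t).2.2 ^ k *
          MvPolynomial.eval ![(γ t).1 / (1 - (γ t).2.2), (γ t).2.1 / (1 - (γ t).2.2)] r
        = t ^ k * MvPolynomial.eval ![a, b] r := by
      filter_upwards [self_mem_nhdsWithin] with t ht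
      have h1t : (1 : ℝ) - t ≠ 0 := by have := ht.2; intro hh; linarith
      show t ^ k * MvPolynomial.eval ![a * (1 - t) / (1 - t), b * (1 - t) / (1 - t)] r = _
      rw [mul_div_assoc, div_self h1t, mul_one, mul_div_assoc, div_self h1t, mul_one]
    have : (nhdsWithin (1:ℝ) (Set.Ico (0:ℝ) 1)).NeBot :=
      right_nhdsWithin_Ico_neBot (by norm_num)
    exact tendsto_nhds_unique h2 (h1.congr' heq)
  have hicc : (Set.Icc (0:ℝ) 1).Infinite := Set.Icc_infinite (by norm_num)
  -- Step 2: extend to all b, for a ∈ [0,1]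
  have key2 : ∀ a ∈ Set.Icc (0:ℝ) 1, ∀ b : ℝ, MvPolynomial.eval ![a, b] r = L := by
    intro a ha b
    set p : Polynomial ℝ :=
      MvPolynomial.aeval ![Polynomial.C a, Polynomial.X] r - Polynomial.C L with hp
    have hev : ∀ t : ℝ, Polynomial.eval t p = MvPolynomial.eval ![a, t] r - L := by
      intro t
      simp only [p, Polynomial.eval_sub, Polynomial.eval_C, sub_left_inj]
      rw [aux_eval_aeval]
      have hv : (fun i => Polynomial.eval t (![Polynomial.C a, Polynomial.X] i)) = ![a, t] := by
        funext i; fin_cases i <;> simp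
      rw [hv]
    have hp0 : p = 0 := by
      apply Polynomial.eq_zero_of_infinite_isRoot
      apply Set.Infinite.mono ?_ hicc
      intro t ht
      simp only [Set.mem_setOf_eq, Polynomial.IsRoot, hev]
      rw [key a ha t ht]; ring
    have hb := hev b
    rw [hp0, Polynomial.eval_zero] at hb
    linarith [hb]
  -- Step 3: extend to all a
  have key3 : ∀ a b : ℝ, MvPolynomial.eval ![a, b] r = L := by
    intro a b
    set p : Polynomial ℝ :=
      MvPolynomial.aeval ![Polynomial.X, Polynomial.C b] r - Polynomial.C L with hp
    have hev : ∀ t : ℝ, Polynomial.eval t p = MvPolynomial.eval ![t, b] r - L := by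
      intro t
      simp only [p, Polynomial.eval_sub, Polynomial.eval_C, sub_left_inj]
      rw [aux_eval_aeval]
      have hv : (fun i => Polynomial.eval t (![Polynomial.X, Polynomial.C b] i)) = ![t, b] := by
        funext i; fin_cases i <;> simp
      rw [hv]
    have hp0 : p = 0 := by
      apply Polynomial.eq_zero_of_infinite_isRoot
      apply Set.Infinite.mono ?_ hicc
      intro t ht
      simp only [Set.mem_setOf_eq, Polynomial.IsRoot, hev]
      rw [key2 t ht b]; ring
    have hb := hev a
    rw [hp0, Polynomial.eval_zero] at hb
    linarith [hb]
  refine ⟨L, ?_⟩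
  apply MvPolynomial.funext
  intro x
  have hx : x = ![x 0, x 1] := by
    funext i; fin_cases i <;> simp
  rw [hx, key3]
  simp


end
end
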